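/- Let K ≥ 2 be an integer. Then the matrix B satisfies B(M − I) = (M − I)B = I − (1/K)J, B·𝟙 = 0, and BM = MB, where I is the K×K identity matrix, J is the K×K all-ones matrix, and 𝟙 = (1,…,1) ∈ ℝ^K. -/

import Mathlib

open scoped BigOperators

/-- Cyclic successor on `Fin K`. -/
def cycSucc {K : ℕ} (i : Fin K) : Fin K := ⟨((i : ℕ) + 1) % K, Nat.mod_lt _ i.pos⟩

/-- The K×K matrix B with B_{ij} = (1/(2K))(−(K−1) + 2·((j−i) mod K)). -/
noncomputable def Bmat (K : ℕ) : Matrix (Fin K) (Fin K) ℝ :=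
  Matrix.of fun i j => (1 / (2 * (K : ℝ))) * (-((K : ℝ) - 1) + 2 * (((j - i : Fin K) : ℕ) : ℝ))

/-- The cyclic shift permutation matrix, M_{ij} = 1 iff j ≡ i+1 (mod K). -/
def Mmat (K : ℕ) : Matrix (Fin K) (Fin K) ℝ :=
  Matrix.of fun i j => if j = cycSucc i then 1 else 0

/-- The all-ones K×K matrix. -/
def Jmat (K : ℕ) : Matrix (Fin K) (Fin K) ℝ := Matrix.of fun _ _ => 1

/-!
B is circulant: `B i j = b (j - i)` in the cyclic group `Fin K`, where `b d` is affine in the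
representative of `d`. Right multiplication by M shifts columns, so `B (M - I)` has entries
`b (d - 1) - b d = -1/K`, except at `d = 0` where the wrap-around from `K - 1` to `0` adds `1`;
`M B` has the same entries `b (j - i - 1)` as `B M`. The rows of B sum to zero because
`b (rev d) = - b d`.
-/

open Matrix Finset

noncomputable def bGen (K : ℕ) (d : Fin K) : ℝ :=
  (1 / (2 * (K : ℝ))) * (-((K : ℝ) - 1) + 2 * ((d : ℕ) : ℝ))

lemma Bmat_apply (K : ℕ) (i j : Fin K) : Bmat K i j = bGen K (j - i) := rfl

lemma bGen_rev (K : ℕ) (d : Fin K) : bGen K (Fin.rev d) = -bGen K d := by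
  have hrev : ((d.rev : ℕ) : ℝ) = K - 1 - d := by
    rw [Fin.val_rev, Nat.cast_sub d.isLt]
    push_cast
    ring
  simp only [bGen, hrev]
  ring

lemma sum_bGen (K : ℕ) : ∑ d, bGen K d = 0 := by
  have h : ∑ d, bGen K (Fin.rev d) = ∑ d, bGen K d :=
    Fintype.sum_equiv Fin.revPerm _ _ fun _ => rfl
  simp only [bGen_rev, sum_neg_distrib] at h
  linarith

section NeZero

variable {K : ℕ} [NeZero K]

lemma Bmat_mulVec_one : (Bmat K).mulVec (fun _ => 1) = 0 := by
  funext i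
  simp only [mulVec, dotProduct, mul_one, Bmat_apply, Pi.zero_apply]
  exact (Fintype.sum_equiv (Equiv.subRight i) _ (bGen K) fun _ => rfl).trans (sum_bGen K)

lemma cycSucc_eq_add_one (i : Fin K) : cycSucc i = i + 1 := by
  ext
  simp [cycSucc, Fin.val_add]

lemma mul_Mmat_apply (A : Matrix (Fin K) (Fin K) ℝ) (i j : Fin K) :
    (A * Mmat K) i j = A i (j - 1) := by
  simp [mul_apply, Mmat, cycSucc_eq_add_one, ← sub_eq_iff_eq_add]

lemma Mmat_mul_apply (A : Matrix (Fin K) (Fin K) ℝ) (i j : Fin K) :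
    (Mmat K * A) i j = A (i + 1) j := by
  simp [mul_apply, Mmat, cycSucc_eq_add_one]

lemma bGen_sub_one_sub (d : Fin K) :
    bGen K (d - 1) - bGen K d = (if d = 0 then 1 else 0) - (K : ℝ)⁻¹ := by
  obtain ⟨n, rfl⟩ := Nat.exists_eq_add_one_of_ne_zero (NeZero.ne K)
  have hK : ((n + 1 : ℕ) : ℝ) ≠ 0 := by exact_mod_cast n.succ_ne_zero
  rw [bGen, bGen, Fin.coe_sub_one]
  split_ifs with hd
  · subst hd
    simp only [Fin.val_zero, Nat.cast_zero]
    field_simp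
    push_cast
    ring
  · rw [Nat.cast_pred (Fin.pos_iff_ne_zero.mpr hd)]
    field_simp
    ring

lemma Bmat_mul_Mmat_comm : Bmat K * Mmat K = Mmat K * Bmat K := by
  ext i j
  rw [mul_Mmat_apply, Mmat_mul_apply, Bmat_apply, Bmat_apply, sub_right_comm, sub_sub]

lemma Bmat_mul_Mmat_sub_one : Bmat K * (Mmat K - 1) = 1 - (K : ℝ)⁻¹ • Jmat K := by
  ext i j
  rw [mul_sub, mul_one, Matrix.sub_apply, mul_Mmat_apply, Bmat_apply, Bmat_apply, sub_right_comm,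
    bGen_sub_one_sub]
  simp [one_apply, Jmat, sub_eq_zero, eq_comm]

end NeZero

theorem Bmat_properties_general (K : ℕ) :
    Bmat K * (Mmat K - 1) = (Mmat K - 1) * Bmat K ∧
    Bmat K * (Mmat K - 1) = 1 - ((K : ℝ))⁻¹ • Jmat K ∧
    (Bmat K).mulVec (fun _ => (1 : ℝ)) = 0 ∧
    Bmat K * Mmat K = Mmat K * Bmat K := by
  rcases K.eq_zero_or_pos with rfl | hK
  · exact ⟨Subsingleton.elim _ _, Subsingleton.elim _ _, Subsingleton.elim _ _,
      Subsingleton.elim _ _⟩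
  have : NeZero K := ⟨hK.ne'⟩
  have hcomm : Bmat K * Mmat K = Mmat K * Bmat K := Bmat_mul_Mmat_comm
  exact ⟨by rw [mul_sub, sub_mul, hcomm, mul_one, one_mul], Bmat_mul_Mmat_sub_one,
    Bmat_mulVec_one, hcomm⟩

theorem Bmat_properties (K : ℕ) (hK : 2 ≤ K) :
    Bmat K * (Mmat K - 1) = (Mmat K - 1) * Bmat K ∧
    Bmat K * (Mmat K - 1) = 1 - ((K : ℝ))⁻¹ • Jmat K ∧
    (Bmat K).mulVec (fun _ => (1 : ℝ)) = 0 ∧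
    Bmat K * Mmat K = Mmat K * Bmat K :=
  Bmat_properties_general K
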